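/- arXiv:2110.02809 — 2 statements merged into one kernel-verified Lean document; each statement's English description precedes it below -/
import Mathlib

section
/- In the construction reducing Maximum Independent Set in graphs of maximum degree 3 to linearizing a linear order Γ and an interval order Π: for any linear extension Π' of Π, the only possible adjacencies of Γ and Π' are the pairs (p_j, e_j) and (e_j, q_j) for 1 ≤ j ≤ m and the pairs (u_i, v_i) for 1 ≤ i ≤ n; moreover, for each j the pairs (p_j, e_j) and (e_j, q_j) cannot both be adjacencies, so at most m adjacencies come from the pairs involving edge markers. -/
/-! Every separator `z_h` occurs only once in `Z`, before all the blocks `⟨u_i v_i⟩`, so in `Π` it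
precedes every other marker and `z_h ≺ z_{h'}` for `h < h'`. A consecutive pair of `Γ` other than
`(p_j, e_j)`, `(e_j, q_j)`, `(u_i, v_i)` either ends in a separator and starts with a
non-separator, or it is `z_h` followed by a non-separator with `h` not the last index; in the
second case `z_{h+1}` lies strictly between the two in every linear extension. Finally `q_j` occurs
in block `l_j` and `p_j` in block `r_j > l_j`, so `q_j ≺ p_j`, and `p_j e_j q_j` cannot be
consecutive in a linear extension. -/

/-- The list of ordered pairs of consecutive elements of a list. -/
def consecPairs {α : Type*} (l : List α) : List (α × α) := l.zip l.tail

/-- The adjacencies of two permutations `l1` and `l2`, as a list of ordered pairs: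
the pairs of consecutive elements of `l1` that are also pairs of consecutive elements of `l2`. -/
def adjPairs {α : Type*} [DecidableEq α] (l1 l2 : List α) : List (α × α) :=
  (consecPairs l1).filter (fun ab => ab ∈ consecPairs l2)

/-- The number of adjacencies of two permutations. -/
def numAdj {α : Type*} [DecidableEq α] (l1 l2 : List α) : ℕ := (adjPairs l1 l2).length

/-- `(a, b)` is an adjacency of the permutations `l1` and `l2` if `a` appears immediately
before `b` in both `l1` and `l2`. -/
def IsAdjacency {α : Type*} (l1 l2 : List α) (a b : α) : Prop :=
  (a, b) ∈ consecPairs l1 ∧ (a, b) ∈ consecPairs l2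

/-- `L` is (the permutation representing) a linear extension of the partial order `rel`:
`L` lists each element exactly once, and whenever `rel a b` holds, `a` appears before `b`. -/
def IsLinearization {α : Type*} (rel : α → α → Prop) (L : List α) : Prop :=
  L.Nodup ∧ (∀ x, x ∈ L) ∧ ∀ a b, rel a b → List.Sublist [a, b] L

/-- The markers of the reduction from Maximum Independent Set: two vertex markers `u i`, `v i`
per vertex, selection markers `p j`, `q j` and an edge marker `e j` per edge, and `n + m`
separation markers `z h`. -/
inductive Marker (n m : ℕ) where
  | u : Fin n → Marker n m
  | v : Fin n → Marker n m
  | p : Fin m → Marker n m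
  | q : Fin m → Marker n m
  | e : Fin m → Marker n m
  | z : Fin (n + m) → Marker n m
  deriving DecidableEq

/-- The linear order `Γ`:
`u_1 v_1 z_1 … u_n v_n z_n  p_1 e_1 q_1 z_{n+1} … p_m e_m q_m z_{n+m}`. -/
def GammaMIS (n m : ℕ) : List (Marker n m) :=
  ((List.finRange n).flatMap fun i => [.u i, .v i, .z (Fin.castAdd m i)]) ++
  ((List.finRange m).flatMap fun j => [.p j, .e j, .q j, .z (Fin.natAdd n j)])

/-- The block `⟨u_i v_i⟩` of the sequence `Z`: the markers `q j` for edges `j` with `l j = i`,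
then `u i`, then `p j e j` for edges `j` with `r j = i`, then `e j q j` for edges `j` with
`l j = i`, then `v i`, then `p j` for edges `j` with `r j = i`. -/
def uvBlock (n m : ℕ) (l r : Fin m → Fin n) (i : Fin n) : List (Marker n m) :=
  (((List.finRange m).filter (fun j => l j = i)).map .q) ++
  [.u i] ++
  (((List.finRange m).filter (fun j => r j = i)).flatMap fun j => [.p j, .e j]) ++
  (((List.finRange m).filter (fun j => l j = i)).flatMap fun j => [.e j, .q j]) ++
  [.v i] ++
  (((List.finRange m).filter (fun j => r j = i)).map .p)

/-- The sequence `Z = z_1 z_2 … z_{n+m} ⟨u_1 v_1⟩ ⟨u_2 v_2⟩ … ⟨u_n v_n⟩`. -/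
def Zseq (n m : ℕ) (l r : Fin m → Fin n) : List (Marker n m) :=
  ((List.finRange (n + m)).map .z) ++ ((List.finRange n).flatMap (uvBlock n m l r))

/-- The sequence `Z₂` obtained from `Z` by replacing each marker occurring only once by two
consecutive copies, so that every marker occurs exactly twice. -/
def Z2 (n m : ℕ) (l r : Fin m → Fin n) : List (Marker n m) :=
  (Zseq n m l r).flatMap fun x => if (Zseq n m l r).count x = 1 then [x, x] else [x]

/-- The index in `Z₂` of the first occurrence of a marker: the left endpoint of its interval. -/
def firstIdx (n m : ℕ) (l r : Fin m → Fin n) (x : Marker n m) : ℕ :=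
  (Z2 n m l r).idxOf x

/-- The index in `Z₂` of the second occurrence of a marker: the right endpoint of its interval. -/
def lastIdx (n m : ℕ) (l r : Fin m → Fin n) (x : Marker n m) : ℕ :=
  (Z2 n m l r).length - 1 - (Z2 n m l r).reverse.idxOf x

/-- The interval order `Π`: marker `x` precedes marker `y` iff the open interval of `x`
(between the indices of its two occurrences in `Z₂`) lies entirely to the left of the open
interval of `y`. -/
def PiRel (n m : ℕ) (l r : Fin m → Fin n) (x y : Marker n m) : Prop :=
  lastIdx n m l r x ≤ firstIdx n m l r y

open List

namespace List

variable {α : Type*}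

theorem exists_eq_append_of_mem_consecPairs {l : List α} {a b : α}
    (h : (a, b) ∈ consecPairs l) : ∃ l₁ l₂, l = l₁ ++ a :: b :: l₂ := by
  induction l with
  | nil => simp [consecPairs] at h
  | cons x t ih =>
    cases t with
    | nil => simp [consecPairs] at h
    | cons y t =>
      rcases mem_cons.mp h with hxy | ht
      · obtain ⟨rfl, rfl⟩ := Prod.mk.inj hxy
        exact ⟨[], t, rfl⟩
      · obtain ⟨l₁, l₂, hl⟩ := ih ht
        exact ⟨x :: l₁, l₂, by rw [hl, cons_append]⟩

theorem IsChain.rel_of_mem_consecPairs {R : α → α → Prop} {l : List α} (hl : l.IsChain R)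
    {a b : α} (h : (a, b) ∈ consecPairs l) : R a b := by
  obtain ⟨l₁, l₂, rfl⟩ := exists_eq_append_of_mem_consecPairs h
  exact (isChain_append_cons_cons.mp hl).2.1

theorem Nodup.idxOf_eq_succ_of_mem_consecPairs [DecidableEq α] {l : List α} (hl : l.Nodup)
    {a b : α} (h : (a, b) ∈ consecPairs l) : l.idxOf b = l.idxOf a + 1 := by
  obtain ⟨l₁, l₂, rfl⟩ := exists_eq_append_of_mem_consecPairs h
  obtain ⟨-, hab, hdisj⟩ := nodup_append.mp hl
  have ha : a ∉ l₁ := fun ha => hdisj a ha a mem_cons_self rfl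
  have hb : b ∉ l₁ := fun hb => hdisj b hb b (mem_cons_of_mem _ mem_cons_self) rfl
  have hba : a ≠ b := fun h => (nodup_cons.mp hab).1 (h ▸ mem_cons_self)
  rw [idxOf_append_of_notMem ha, idxOf_append_of_notMem hb, idxOf_cons_self,
    idxOf_cons_ne _ hba, idxOf_cons_self]

theorem mem_flatMap_ite_pair_singleton (p : α → Prop) [DecidablePred p] {s : List α} {x : α} :
    (x ∈ s.flatMap fun y => if p y then [y, y] else [y]) ↔ x ∈ s := by
  simp only [mem_flatMap]
  constructor
  · rintro ⟨y, hy, hx⟩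
    split at hx <;> simp at hx <;> simpa [hx] using hy
  · exact fun hx => ⟨x, hx, by split <;> simp⟩

theorem length_sub_one_sub_idxOf_reverse_le_idxOf [DecidableEq α] {A B : List α} {x y : α}
    (hx : x ∉ B) (hy : y ∉ A) :
    (A ++ B).length - 1 - (A ++ B).reverse.idxOf x ≤ (A ++ B).idxOf y := by
  rw [reverse_append, idxOf_append_of_notMem hy,
    idxOf_append_of_notMem (by simpa using hx), length_append, length_reverse]
  omega

theorem mem_take_finRange_iff {k c : ℕ} {x : Fin k} :
    x ∈ (finRange k).take c ↔ x.val < c := by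
  rw [mem_take_iff_idxOf_lt (mem_finRange x), idxOf_finRange]

theorem mem_drop_finRange_iff {k c : ℕ} {x : Fin k} :
    x ∈ (finRange k).drop c ↔ c ≤ x.val := by
  have hx := mem_finRange x
  rw [← take_append_drop c (finRange k), mem_append] at hx
  have hdisj := disjoint_take_drop (nodup_finRange k) (le_refl c)
  rw [← not_lt, ← mem_take_finRange_iff]
  exact ⟨fun h ht => hdisj ht h, fun h => hx.resolve_left h⟩

end List

theorem IsLinearization.idxOf_lt {α : Type*} [DecidableEq α] {rel : α → α → Prop} {L : List α}
    (hL : IsLinearization rel L) {a b : α} (hab : rel a b) : L.idxOf a < L.idxOf b := by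
  have hpw : L.Pairwise fun x y => L.idxOf x < L.idxOf y := by
    rw [pairwise_iff_getElem]
    intro i j hi hj hij
    rwa [hL.1.idxOf_getElem, hL.1.idxOf_getElem]
  exact pairwise_iff_forall_sublist.mp hpw (hL.2.2 a b hab)

def Marker.IsSep {n m : ℕ} (x : Marker n m) : Prop := ∃ k, x = .z k

section IntervalOrder

variable {n m : ℕ} {l r : Fin m → Fin n}

theorem piRel_of_zseq_eq_append {x y : Marker n m} {P S : List (Marker n m)}
    (hZ : Zseq n m l r = P ++ S) (hx : x ∉ S) (hy : y ∉ P) : PiRel n m l r x y := by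
  unfold PiRel lastIdx firstIdx Z2
  rw [hZ, flatMap_append]
  apply length_sub_one_sub_idxOf_reverse_le_idxOf
  · rwa [mem_flatMap_ite_pair_singleton]
  · rwa [mem_flatMap_ite_pair_singleton]

theorem eq_of_q_mem_uvBlock {j : Fin m} {i : Fin n} (h : .q j ∈ uvBlock n m l r i) : l j = i := by
  simpa [uvBlock] using h

theorem eq_of_p_mem_uvBlock {j : Fin m} {i : Fin n} (h : .p j ∈ uvBlock n m l r i) : r j = i := by
  simpa [uvBlock] using h

theorem not_isSep_of_mem_uvBlock {i : Fin n} {x : Marker n m} (h : x ∈ uvBlock n m l r i) :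
    ¬ x.IsSep := by
  rintro ⟨k, rfl⟩
  simp [uvBlock] at h

theorem piRel_z_of_not_isSep (k : Fin (n + m)) {y : Marker n m} (hy : ¬ y.IsSep) :
    PiRel n m l r (.z k) y := by
  refine piRel_of_zseq_eq_append rfl ?_ ?_
  · simp only [mem_flatMap, not_exists, not_and]
    exact fun i _ h => not_isSep_of_mem_uvBlock h ⟨k, rfl⟩
  · simp only [mem_map, not_exists, not_and]
    exact fun k _ hk => hy ⟨k, hk.symm⟩

theorem piRel_z_z {k k' : Fin (n + m)} (hlt : k < k') : PiRel n m l r (.z k) (.z k') := by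
  rw [Fin.lt_def] at hlt
  refine piRel_of_zseq_eq_append (P := ((finRange (n + m)).take (k + 1)).map .z)
    (S := ((finRange (n + m)).drop (k + 1)).map .z ++ (finRange n).flatMap (uvBlock n m l r))
    (by rw [Zseq, ← append_assoc, ← map_append, take_append_drop]) ?_ ?_
  · simp only [mem_append, mem_map, mem_flatMap, Marker.z.injEq, exists_eq_right,
      mem_drop_finRange_iff, not_or, not_exists, not_and]
    exact ⟨by omega, fun i _ h => not_isSep_of_mem_uvBlock h ⟨k, rfl⟩⟩
  · simp only [mem_map, Marker.z.injEq, exists_eq_right, mem_take_finRange_iff]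
    omega

theorem piRel_q_p {j : Fin m} (hj : l j < r j) : PiRel n m l r (.q j) (.p j) := by
  refine piRel_of_zseq_eq_append
    (P := (finRange (n + m)).map .z ++ ((finRange n).take (l j + 1)).flatMap (uvBlock n m l r))
    (S := ((finRange n).drop (l j + 1)).flatMap (uvBlock n m l r))
    (by rw [Zseq, append_assoc, ← flatMap_append, take_append_drop]) ?_ ?_
  · simp only [mem_flatMap, mem_drop_finRange_iff, not_exists, not_and]
    intro i hi hq
    have := eq_of_q_mem_uvBlock hq
    omega
  · simp only [mem_append, mem_map, mem_flatMap, mem_take_finRange_iff, reduceCtorEq, and_false,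
      exists_false, false_or, not_exists, not_and]
    intro i hi hp
    have := eq_of_p_mem_uvBlock hp
    have : (l j).val < (r j).val := hj
    omega

end IntervalOrder

def IsCandidateAdj {n m : ℕ} (a b : Marker n m) : Prop :=
  (∃ j, a = .p j ∧ b = .e j) ∨ (∃ j, a = .e j ∧ b = .q j) ∨ (∃ i, a = .u i ∧ b = .v i)

def GammaStep {n m : ℕ} (a b : Marker n m) : Prop :=
  IsCandidateAdj a b ∨ (¬ a.IsSep ∧ b.IsSep) ∨
    ((∃ k : Fin (n + m), a = .z k ∧ k.val + 1 < n + m) ∧ ¬ b.IsSep)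

def gammaBlock {n m : ℕ} (k : Fin (n + m)) : List (Marker n m) :=
  match finSumFinEquiv.symm k with
  | .inl i => [.u i, .v i, .z k]
  | .inr j => [.p j, .e j, .q j, .z k]

theorem gammaMIS_eq_flatMap (n m : ℕ) :
    GammaMIS n m = (finRange (n + m)).flatMap gammaBlock := by
  have hcast (h : n ≤ n + m) (i : Fin n) : Fin.castLE h i = Fin.castAdd m i := rfl
  rw [← List.ofFn_id, List.ofFn_add]
  simp [GammaMIS, gammaBlock, List.ofFn_eq_map, List.flatMap_map, hcast]

theorem gammaBlock_ne_nil {n m : ℕ} (k : Fin (n + m)) : gammaBlock k ≠ [] := by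
  unfold gammaBlock; split <;> simp

theorem isChain_gammaBlock {n m : ℕ} (k : Fin (n + m)) : (gammaBlock k).IsChain GammaStep := by
  unfold gammaBlock; split <;> simp [GammaStep, IsCandidateAdj, Marker.IsSep]

theorem getLast?_gammaBlock {n m : ℕ} (k : Fin (n + m)) :
    (gammaBlock k).getLast? = some (.z k) := by
  unfold gammaBlock; split <;> simp

theorem not_isSep_of_mem_head?_gammaBlock {n m : ℕ} {k : Fin (n + m)} {y : Marker n m}
    (hy : y ∈ (gammaBlock k).head?) : ¬ y.IsSep := by
  unfold gammaBlock at hy; split at hy <;> simp only [head?_cons, Option.mem_some_iff] at hy <;>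
    simp [← hy, Marker.IsSep]

theorem isChain_gammaStep_gammaMIS (n m : ℕ) : (GammaMIS n m).IsChain GammaStep := by
  rw [gammaMIS_eq_flatMap, flatMap_def, isChain_flatten (by simp [gammaBlock_ne_nil]), isChain_map]
  refine ⟨by simpa using isChain_gammaBlock, (pairwise_lt_finRange _).isChain.imp ?_⟩
  intro k k' hlt x hx y hy
  rw [getLast?_gammaBlock, Option.mem_some_iff] at hx
  exact Or.inr (Or.inr ⟨⟨k, hx.symm, by omega⟩, not_isSep_of_mem_head?_gammaBlock hy⟩)

section LinearExtension

variable {n m : ℕ} {l r : Fin m → Fin n} {L : List (Marker n m)}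

theorem IsLinearization.isCandidateAdj_of_isAdjacency (hL : IsLinearization (PiRel n m l r) L)
    {a b : Marker n m} (hab : IsAdjacency (GammaMIS n m) L a b) : IsCandidateAdj a b := by
  have hsucc := hL.1.idxOf_eq_succ_of_mem_consecPairs hab.2
  rcases (isChain_gammaStep_gammaMIS n m).rel_of_mem_consecPairs hab.1 with
    hcand | ⟨ha, k, rfl⟩ | ⟨⟨k, rfl, hk⟩, hb⟩
  · exact hcand
  · have := hL.idxOf_lt (piRel_z_of_not_isSep k ha)
    omega
  · -- `z_{k+1}` would have to lie between `z_k` and `b`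
    have hzz := hL.idxOf_lt (piRel_z_z (k' := ⟨k + 1, hk⟩) (Fin.lt_def.mpr k.val.lt_succ_self))
    have hzb := hL.idxOf_lt (piRel_z_of_not_isSep ⟨k + 1, hk⟩ hb)
    omega

theorem IsLinearization.not_isAdjacency_p_e_and_e_q (hL : IsLinearization (PiRel n m l r) L)
    {j : Fin m} (hj : l j < r j) :
    ¬ (IsAdjacency (GammaMIS n m) L (.p j) (.e j) ∧
      IsAdjacency (GammaMIS n m) L (.e j) (.q j)) := by
  rintro ⟨hpe, heq⟩
  have hpe_succ := hL.1.idxOf_eq_succ_of_mem_consecPairs hpe.2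
  have heq_succ := hL.1.idxOf_eq_succ_of_mem_consecPairs heq.2
  have hqp := hL.idxOf_lt (piRel_q_p hj)
  omega

end LinearExtension

theorem only_possible_adjacencies_MIS_general
    (n m : ℕ) (l r : Fin m → Fin n)
    (hlr : ∀ j, l j < r j)
    (L : List (Marker n m)) (hL : IsLinearization (PiRel n m l r) L) :
    (∀ a b : Marker n m, IsAdjacency (GammaMIS n m) L a b →
      (∃ j, a = .p j ∧ b = .e j) ∨ (∃ j, a = .e j ∧ b = .q j) ∨
      (∃ i, a = .u i ∧ b = .v i)) ∧
    (∀ j : Fin m, ¬ (IsAdjacency (GammaMIS n m) L (.p j) (.e j) ∧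
      IsAdjacency (GammaMIS n m) L (.e j) (.q j))) ∧
    Nat.card {j : Fin m // IsAdjacency (GammaMIS n m) L (.p j) (.e j) ∨
      IsAdjacency (GammaMIS n m) L (.e j) (.q j)} ≤ m := by
  refine ⟨fun a b => hL.isCandidateAdj_of_isAdjacency,
    fun j => hL.not_isAdjacency_p_e_and_e_q (hlr j), ?_⟩
  simpa using Finite.card_subtype_le (α := Fin m) _

/-- For any linear extension `L` of the interval order `Π` of the reduction, the only possible
adjacencies of `Γ` and `L` are the pairs `(p j, e j)`, `(e j, q j)` for `1 ≤ j ≤ m` and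
`(u i, v i)` for `1 ≤ i ≤ n`; moreover, for each `j` the pairs `(p j, e j)` and `(e j, q j)`
cannot both be adjacencies, so at most `m` adjacencies involve edge markers. -/
theorem only_possible_adjacencies_MIS
    (n m : ℕ) (l r : Fin m → Fin n)
    (hlr : ∀ j, l j < r j)
    (hsimple : ∀ j j', l j = l j' → r j = r j' → j = j')
    (hdeg : ∀ i : Fin n,
      (Finset.univ.filter (fun j : Fin m => l j = i ∨ r j = i)).card ≤ 3)
    (L : List (Marker n m)) (hL : IsLinearization (PiRel n m l r) L) :
    (∀ a b : Marker n m, IsAdjacency (GammaMIS n m) L a b →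
      (∃ j, a = .p j ∧ b = .e j) ∨ (∃ j, a = .e j ∧ b = .q j) ∨
      (∃ i, a = .u i ∧ b = .v i)) ∧
    (∀ j : Fin m, ¬ (IsAdjacency (GammaMIS n m) L (.p j) (.e j) ∧
      IsAdjacency (GammaMIS n m) L (.e j) (.q j))) ∧
    Nat.card {j : Fin m // IsAdjacency (GammaMIS n m) L (.p j) (.e j) ∨
      IsAdjacency (GammaMIS n m) L (.e j) (.q j)} ≤ m :=
  only_possible_adjacencies_MIS_general n m l r hlr L hL
end

section
/- In the construction reducing (3,2)-SAT to linearizing two weak orders Γ and Π: for any two linear extensions of Γ and Π respectively and any variable index i, there are at most four adjacencies from ⟨ab⟩_i ∪ ⟨pqrstuv⟩_i; moreover, if there are exactly four such adjacencies, then they are either {(a_i^+, b_i^+), (q_i, r_i), (s_i, t_i), (u_i, v_i)} or {(p_i, q_i), (r_i, s_i), (t_i, u_i), (a_i^-, b_i^-)}. -/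
/-- The markers of the reduction from (3,2)-SAT: per variable `i`, seven variable markers
`p i, q i, r i, s i, t i, u i, v i`, selection markers `ap i = a_i^+`, `bp i = b_i^+`,
`am i = a_i^-`, `bm i = b_i^-`, and a dummy marker `d i`; per clause `j`, literal markers
`e j h = e_j^h` and `f j h = f_j^h` for `h ∈ {1,2}`, and a separation marker `z j`. -/
inductive WMarker (n m : ℕ) where
  | p : Fin n → WMarker n m
  | q : Fin n → WMarker n m
  | r : Fin n → WMarker n m
  | s : Fin n → WMarker n m
  | t : Fin n → WMarker n m
  | u : Fin n → WMarker n m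
  | v : Fin n → WMarker n m
  | ap : Fin n → WMarker n m
  | bp : Fin n → WMarker n m
  | am : Fin n → WMarker n m
  | bm : Fin n → WMarker n m
  | d : Fin n → WMarker n m
  | e : Fin m → Fin 2 → WMarker n m
  | f : Fin m → Fin 2 → WMarker n m
  | z : Fin m → WMarker n m
  deriving DecidableEq

/-- The weak order `Γ`, given as a rank function assigning to each marker the index of its
bucket. The buckets are, in order: for each clause `j`, `E_j = {e j 1, e j 2}`,
`F_j = {f j 1, f j 2}`, `{z j}`; then for each variable `i`, the eight buckets
`{p i, ap i}`, `{q i, bp i}`, `{r i}`, `{s i}`, `{t i}`, `{u i, am i}`, `{v i, bm i}`,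
`{d i}`. Two markers are related in `Γ` iff the rank of the first is smaller. -/
def rankGamma (n m : ℕ) : WMarker n m → ℕ
  | .e j _ => 3 * j.val
  | .f j _ => 3 * j.val + 1
  | .z j => 3 * j.val + 2
  | .p i => 3 * m + 8 * i.val
  | .ap i => 3 * m + 8 * i.val
  | .q i => 3 * m + 8 * i.val + 1
  | .bp i => 3 * m + 8 * i.val + 1
  | .r i => 3 * m + 8 * i.val + 2
  | .s i => 3 * m + 8 * i.val + 3
  | .t i => 3 * m + 8 * i.val + 4
  | .u i => 3 * m + 8 * i.val + 5
  | .am i => 3 * m + 8 * i.val + 5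
  | .v i => 3 * m + 8 * i.val + 6
  | .bm i => 3 * m + 8 * i.val + 6
  | .d i => 3 * m + 8 * i.val + 7

/-- Offset (within the nine buckets `P_i Q_i R_i S_i T_i U_i V_i A_i B_i` of the selection
gadget `⟨Y_i⟩`) of the bucket containing the literal marker `e j h`, in terms of the slot
`g ∈ {1,2,3}` of the literal occurrence in its variable and its polarity: the marker of the
(positive) first occurrence goes to `P_i`, the marker of the (negative) third occurrence goes
to `U_i`, and the marker of the second occurrence goes to `R_i` if positive, `S_i` if negative. -/
def eOffset (g : Fin 3) (b : Bool) : ℕ :=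
  if g.val = 0 then 0 else if g.val = 1 then (if b then 2 else 3) else 5

/-- Offset of the bucket containing the literal marker `f j h`: `Q_i` for the first occurrence,
`V_i` for the third, and `S_i` (if positive) or `T_i` (if negative) for the second. -/
def fOffset (g : Fin 3) (b : Bool) : ℕ :=
  if g.val = 0 then 1 else if g.val = 1 then (if b then 3 else 4) else 6

/-- The weak order `Π`, given as a rank function assigning to each marker the index of its
bucket. The buckets are, in order: for each variable `i`, the nine buckets
`P_i, Q_i, R_i, S_i, T_i, U_i, V_i, A_i = {ap i, am i}, B_i = {bp i, bm i}`, where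
`P_i`/`Q_i` also contain the `e`/`f` markers of the positive first literal occurrence of
variable `i`, `U_i`/`V_i` also contain the `e`/`f` markers of the negative third occurrence,
the `e`/`f` markers of the second occurrence go to `R_i`/`S_i` (with `d i` in `T_i`) if that
occurrence is positive and to `S_i`/`T_i` (with `d i` in `R_i`) if negative; finally the
buckets `{z 1}, …, {z m}`. Here `var j h` and `slot j h` are the variable and the slot
(first/second/third occurrence) of the `h`-th literal of clause `j`, and `pol i g` is the
polarity of the `g`-th occurrence of variable `i`. -/
def rankPi (n m : ℕ) (var : Fin m → Fin 2 → Fin n) (slot : Fin m → Fin 2 → Fin 3)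
    (pol : Fin n → Fin 3 → Bool) : WMarker n m → ℕ
  | .p i => 9 * i.val
  | .q i => 9 * i.val + 1
  | .r i => 9 * i.val + 2
  | .s i => 9 * i.val + 3
  | .t i => 9 * i.val + 4
  | .u i => 9 * i.val + 5
  | .v i => 9 * i.val + 6
  | .ap i => 9 * i.val + 7
  | .am i => 9 * i.val + 7
  | .bp i => 9 * i.val + 8
  | .bm i => 9 * i.val + 8
  | .d i => 9 * i.val + (if pol i 1 then 4 else 2)
  | .e j h => 9 * (var j h).val + eOffset (slot j h) (pol (var j h) (slot j h))
  | .f j h => 9 * (var j h).val + fOffset (slot j h) (pol (var j h) (slot j h))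
  | .z j => 9 * n + j.val

/-- The number of clauses satisfied by the assignment `σ`: clause `j` is satisfied if one of
its two literals evaluates to true, i.e., `σ (var j h) = pol (var j h) (slot j h)` for some
`h`. -/
def satCount (n m : ℕ) (var : Fin m → Fin 2 → Fin n) (slot : Fin m → Fin 2 → Fin 3)
    (pol : Fin n → Fin 3 → Bool) (σ : Fin n → Bool) : ℕ :=
  (Finset.univ.filter (fun j : Fin m =>
    σ (var j 0) = pol (var j 0) (slot j 0) ∨ σ (var j 1) = pol (var j 1) (slot j 1))).card

/-- The chain `p_i q_i r_i s_i t_i u_i v_i` of variable markers of variable `i`;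
the set `⟨pqrstuv⟩_i` of candidate adjacencies consists of its consecutive pairs. -/
def chain (n m : ℕ) (i : Fin n) : List (WMarker n m) :=
  [.p i, .q i, .r i, .s i, .t i, .u i, .v i]

/-- The two candidate adjacencies `⟨ab⟩_i = {(a_i^+, b_i^+), (a_i^-, b_i^-)}`. -/
def abPairs (n m : ℕ) (i : Fin n) : List (WMarker n m × WMarker n m) :=
  [(.ap i, .bp i), (.am i, .bm i)]

/-!
The eight candidate adjacencies of variable `i` form a cycle
`(a⁺,b⁺), (p,q), (q,r), (r,s), (s,t), (t,u), (u,v), (a⁻,b⁻)` in which no two neighbours are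
both adjacencies. For `(a⁺,b⁺), (p,q)` and `(u,v), (a⁻,b⁻)` this is read off `Γ`, for
`(a⁻,b⁻), (a⁺,b⁺)` off `Π`: two elements of one bucket cannot both be immediately followed by
elements of the next bucket. Two consecutive chain pairs around `x ∈ {q,…,u}` are impossible
in `Π`, because the bucket of `x` there also holds a literal marker or `d_i`, which would have
to sit strictly between the two neighbours of `x`. An independent set of an 8-cycle has at most
four elements, and exactly four only for the two alternating sets.
-/

section Adjacency
variable {α : Type*}

theorem mem_consecPairs_iff {l : List α} {a b : α} :
    (a, b) ∈ consecPairs l ↔ ∃ (k : ℕ) (hk : k + 1 < l.length), l[k] = a ∧ l[k + 1] = b := by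
  simp only [consecPairs, List.mem_iff_getElem, List.length_zip, List.length_tail,
    List.getElem_zip, List.getElem_tail, Prod.mk.injEq]
  constructor
  · rintro ⟨k, hk, h⟩; exact ⟨k, by omega, h⟩
  · rintro ⟨k, hk, h⟩; exact ⟨k, by omega, h⟩

theorem nodup_consecPairs {l : List α} (hl : l.Nodup) : (consecPairs l).Nodup := by
  refine List.Nodup.of_map Prod.snd ?_
  rw [consecPairs, List.map_snd_zip (by simp)]
  exact hl.sublist (List.tail_sublist l)

variable [DecidableEq α] {l : List α} {a b : α}

theorem List.Nodup.idxOf_lt_of_pair_sublist (hl : l.Nodup) (h : List.Sublist [a, b] l) :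
    l.idxOf a < l.idxOf b := by
  obtain ⟨f, hf⟩ := List.sublist_iff_exists_fin_orderEmbedding_get_eq.mp h
  have ha : l[(f 0 : ℕ)] = a := (hf 0).symm
  have hb : l[(f 1 : ℕ)] = b := (hf 1).symm
  rw [← ha, ← hb, hl.idxOf_getElem, hl.idxOf_getElem]
  exact f.strictMono (by decide : (0 : Fin 2) < 1)

theorem List.Nodup.idxOf_eq_succ_of_mem_consecPairs_s13 (hl : l.Nodup)
    (h : (a, b) ∈ consecPairs l) : l.idxOf b = l.idxOf a + 1 := by
  obtain ⟨k, hk, rfl, rfl⟩ := mem_consecPairs_iff.mp h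
  rw [hl.idxOf_getElem, hl.idxOf_getElem]

end Adjacency

namespace IsLinearization
variable {α : Type*} [DecidableEq α] {rel : α → α → Prop} {L : List α}

theorem idxOf_lt_s13 (hL : IsLinearization rel L) {a b : α} (h : rel a b) :
    L.idxOf a < L.idxOf b :=
  hL.1.idxOf_lt_of_pair_sublist (hL.2.2 a b h)

theorem eq_of_mem_consecPairs_of_rel_cross (hL : IsLinearization rel L) {a b a' b' : α}
    (h : (a, b) ∈ consecPairs L) (h' : (a', b') ∈ consecPairs L)
    (hab' : rel a b') (ha'b : rel a' b) : a = a' := by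
  have := hL.1.idxOf_eq_succ_of_mem_consecPairs_s13 h
  have := hL.1.idxOf_eq_succ_of_mem_consecPairs_s13 h'
  have := hL.idxOf_lt_s13 hab'
  have := hL.idxOf_lt_s13 ha'b
  exact (List.idxOf_inj (hL.2.1 a)).mp (by omega)

theorem eq_of_mem_consecPairs_of_rel_of_rel (hL : IsLinearization rel L) {a b c w : α}
    (h : (a, b) ∈ consecPairs L) (h' : (b, c) ∈ consecPairs L)
    (haw : rel a w) (hwc : rel w c) : w = b := by
  have := hL.1.idxOf_eq_succ_of_mem_consecPairs_s13 h
  have := hL.1.idxOf_eq_succ_of_mem_consecPairs_s13 h'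
  have := hL.idxOf_lt_s13 haw
  have := hL.idxOf_lt_s13 hwc
  exact (List.idxOf_inj (hL.2.1 w)).mp (by omega)

end IsLinearization

namespace Finset
variable {n : ℕ} [NeZero n] {S : Finset (Fin n)}

theorem disjoint_map_add_one_of_add_one_notMem (h : ∀ k ∈ S, k + 1 ∉ S) :
    Disjoint S (S.map (addRightEmbedding 1)) := by
  rw [disjoint_left]
  intro k hk hk'
  obtain ⟨j, hj, rfl⟩ := mem_map.mp hk'
  exact h j hj hk

theorem two_mul_card_le_of_add_one_notMem (h : ∀ k ∈ S, k + 1 ∉ S) : 2 * S.card ≤ n := by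
  calc 2 * S.card = (S ∪ S.map (addRightEmbedding 1)).card := by
        rw [card_union_of_disjoint (disjoint_map_add_one_of_add_one_notMem h), card_map]; ring
    _ ≤ n := by simpa using card_le_univ (S ∪ S.map (addRightEmbedding 1))

theorem add_one_mem_iff_notMem_of_two_mul_card_eq (h : ∀ k ∈ S, k + 1 ∉ S)
    (hS : 2 * S.card = n) (k : Fin n) : k + 1 ∈ S ↔ k ∉ S := by
  have huniv : S ∪ S.map (addRightEmbedding 1) = univ := by
    refine eq_univ_of_card _ ?_
    rw [card_union_of_disjoint (disjoint_map_add_one_of_add_one_notMem h), card_map,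
      Fintype.card_fin]
    omega
  refine ⟨fun hk hk' => h k hk' hk, fun hk => ?_⟩
  have : k + 1 ∈ S ∪ S.map (addRightEmbedding 1) := huniv ▸ mem_univ _
  simpa [hk] using this

end Finset

theorem Fin.eq_evens_or_odds_of_add_one_mem_iff {S : Finset (Fin 8)}
    (h : ∀ k : Fin 8, k + 1 ∈ S ↔ k ∉ S) : S = {0, 2, 4, 6} ∨ S = {1, 3, 5, 7} := by
  have h0 := h 0; have h1 := h 1; have h2 := h 2; have h3 := h 3
  have h4 := h 4; have h5 := h 5; have h6 := h 6
  simp only [Fin.reduceAdd, zero_add] at h0 h1 h2 h3 h4 h5 h6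
  clear h
  by_cases hS : (0 : Fin 8) ∈ S
  · left; ext k; fin_cases k <;> simp_all
  · right; ext k; fin_cases k <;> simp_all

section Gadget
variable {n m : ℕ} {occ : Fin n → Fin 3 → Fin m × Fin 2} {var : Fin m → Fin 2 → Fin n}
  {slot : Fin m → Fin 2 → Fin 3} {pol : Fin n → Fin 3 → Bool}

def gadgetCycle (i : Fin n) : Fin 8 → WMarker n m × WMarker n m :=
  ![(.ap i, .bp i), (.p i, .q i), (.q i, .r i), (.r i, .s i), (.s i, .t i), (.t i, .u i),
    (.u i, .v i), (.am i, .bm i)]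

theorem gadgetCycle_injective (i : Fin n) : Function.Injective (gadgetCycle (m := m) i) := by
  rw [← List.nodup_ofFn]
  simp [gadgetCycle, List.ofFn_succ]

theorem mem_abPairs_or_mem_consecPairs_chain_iff (i : Fin n) (ab : WMarker n m × WMarker n m) :
    ab ∈ abPairs n m i ∨ ab ∈ consecPairs (chain n m i) ↔ ∃ k, gadgetCycle i k = ab := by
  simp [abPairs, chain, consecPairs, gadgetCycle, Fin.exists_fin_succ]
  tauto

theorem exists_rankPi_eq_notMem_chain (hvar : ∀ i g, var (occ i g).1 (occ i g).2 = i)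
    (hslot : ∀ i g, slot (occ i g).1 (occ i g).2 = g) (i : Fin n) {k : ℕ} (hk1 : 1 ≤ k)
    (hk5 : k ≤ 5) : ∃ w, rankPi n m var slot pol w = 9 * i.val + k ∧ w ∉ chain n m i := by
  have he : ∀ g, rankPi n m var slot pol (.e (occ i g).1 (occ i g).2) =
      9 * i.val + eOffset g (pol i g) := by simp [rankPi, hvar, hslot]
  have hf : ∀ g, rankPi n m var slot pol (.f (occ i g).1 (occ i g).2) =
      9 * i.val + fOffset g (pol i g) := by simp [rankPi, hvar, hslot]
  interval_cases k
  · exact ⟨_, hf 0, by simp [chain]⟩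
  · cases hp : pol i 1
    · exact ⟨.d i, by simp [rankPi, hp], by simp [chain]⟩
    · exact ⟨.e (occ i 1).1 (occ i 1).2, by simp [he, hp, eOffset], by simp [chain]⟩
  · cases hp : pol i 1
    · exact ⟨.e (occ i 1).1 (occ i 1).2, by simp [he, hp, eOffset], by simp [chain]⟩
    · exact ⟨.f (occ i 1).1 (occ i 1).2, by simp [hf, hp, fOffset], by simp [chain]⟩
  · cases hp : pol i 1
    · exact ⟨.f (occ i 1).1 (occ i 1).2, by simp [hf, hp, fOffset], by simp [chain]⟩
    · exact ⟨.d i, by simp [rankPi, hp], by simp [chain]⟩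
  · exact ⟨_, he 2, by simp [chain]⟩

theorem gadgetCycle_add_one_notMem_adjPairs (hvar : ∀ i g, var (occ i g).1 (occ i g).2 = i)
    (hslot : ∀ i g, slot (occ i g).1 (occ i g).2 = g) {LG LP : List (WMarker n m)}
    (hLG : IsLinearization (fun a b => rankGamma n m a < rankGamma n m b) LG)
    (hLP : IsLinearization
      (fun a b => rankPi n m var slot pol a < rankPi n m var slot pol b) LP)
    (i : Fin n) (k : Fin 8) (hk : gadgetCycle i k ∈ adjPairs LG LP) :
    gadgetCycle i (k + 1) ∉ adjPairs LG LP := by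
  have chain_two_adjacent : ∀ {a b c : WMarker n m}, b ∈ chain n m i →
      rankPi n m var slot pol a + 1 = rankPi n m var slot pol b →
      rankPi n m var slot pol b + 1 = rankPi n m var slot pol c →
      9 * i.val + 1 ≤ rankPi n m var slot pol b → rankPi n m var slot pol b ≤ 9 * i.val + 5 →
      (a, b) ∈ consecPairs LP → (b, c) ∈ consecPairs LP → False := by
    intro a b c hb ha hc hb1 hb5 hab hbc
    obtain ⟨w, hw, hwc⟩ := exists_rankPi_eq_notMem_chain (pol := pol) hvar hslot i
      (k := rankPi n m var slot pol b - 9 * i.val) (by omega) (by omega)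
    have : w = b := hLP.eq_of_mem_consecPairs_of_rel_of_rel hab hbc (by omega) (by omega)
    exact hwc (this ▸ hb)
  intro hk'
  simp only [adjPairs, List.mem_filter, decide_eq_true_eq] at hk hk'
  fin_cases k <;> simp [gadgetCycle] at hk hk'
  · exact absurd (hLG.eq_of_mem_consecPairs_of_rel_cross hk.1 hk'.1
      (by simp [rankGamma]) (by simp [rankGamma])) (by simp)
  iterate 5
    exact chain_two_adjacent (by simp [chain]) (by simp [rankPi]) (by simp [rankPi])
      (by simp [rankPi]) (by simp [rankPi]) hk.2 hk'.2
  · exact absurd (hLG.eq_of_mem_consecPairs_of_rel_cross hk.1 hk'.1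
      (by simp [rankGamma]) (by simp [rankGamma])) (by simp)
  · exact absurd (hLP.eq_of_mem_consecPairs_of_rel_cross hk.2 hk'.2
      (by simp [rankPi]) (by simp [rankPi])) (by simp)

theorem toFinset_filter_adjPairs_eq_image_gadgetCycle (LG LP : List (WMarker n m)) (i : Fin n) :
    ((adjPairs LG LP).filter (fun ab =>
        ab ∈ abPairs n m i ∨ ab ∈ consecPairs (chain n m i))).toFinset =
      (Finset.univ.filter fun k => gadgetCycle i k ∈ adjPairs LG LP).image (gadgetCycle i) := by
  ext ab
  simp only [List.mem_toFinset, List.mem_filter, decide_eq_true_eq,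
    mem_abPairs_or_mem_consecPairs_chain_iff, Finset.mem_image, Finset.mem_filter,
    Finset.mem_univ, true_and]
  constructor
  · rintro ⟨hab, k, rfl⟩; exact ⟨k, hab, rfl⟩
  · rintro ⟨k, hk, rfl⟩; exact ⟨hk, k, rfl⟩

end Gadget

theorem at_most_four_adjacencies_per_variable_general
    (n m : ℕ)
    (occ : Fin n → Fin 3 → Fin m × Fin 2)
    (var : Fin m → Fin 2 → Fin n) (slot : Fin m → Fin 2 → Fin 3)
    (pol : Fin n → Fin 3 → Bool)
    (hvar : ∀ i g, var (occ i g).1 (occ i g).2 = i)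
    (hslot : ∀ i g, slot (occ i g).1 (occ i g).2 = g)
    (LG LP : List (WMarker n m))
    (hLG : IsLinearization (fun a b => rankGamma n m a < rankGamma n m b) LG)
    (hLP : IsLinearization
      (fun a b => rankPi n m var slot pol a < rankPi n m var slot pol b) LP)
    (i : Fin n) :
    ((adjPairs LG LP).filter (fun ab =>
        ab ∈ abPairs n m i ∨ ab ∈ consecPairs (chain n m i))).length ≤ 4 ∧
    (((adjPairs LG LP).filter (fun ab =>
        ab ∈ abPairs n m i ∨ ab ∈ consecPairs (chain n m i))).length = 4 →
      (∀ ab : WMarker n m × WMarker n m,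
        (ab ∈ (adjPairs LG LP).filter (fun ab =>
            ab ∈ abPairs n m i ∨ ab ∈ consecPairs (chain n m i)) ↔
          ab ∈ [((.ap i : WMarker n m), (.bp i : WMarker n m)),
            (.q i, .r i), (.s i, .t i), (.u i, .v i)])) ∨
      (∀ ab : WMarker n m × WMarker n m,
        (ab ∈ (adjPairs LG LP).filter (fun ab =>
            ab ∈ abPairs n m i ∨ ab ∈ consecPairs (chain n m i)) ↔
          ab ∈ [((.p i : WMarker n m), (.q i : WMarker n m)),
            (.r i, .s i), (.t i, .u i), (.am i, .bm i)]))) := by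
  set F := (adjPairs LG LP).filter fun ab =>
    ab ∈ abPairs n m i ∨ ab ∈ consecPairs (chain n m i)
  set S := Finset.univ.filter fun k => gadgetCycle i k ∈ adjPairs LG LP
  have hindep : ∀ k ∈ S, k + 1 ∉ S := by
    simpa [S] using gadgetCycle_add_one_notMem_adjPairs hvar hslot hLG hLP i
  have hF : F.toFinset = S.image (gadgetCycle i) := toFinset_filter_adjPairs_eq_image_gadgetCycle LG LP i
  have hnodup : F.Nodup := ((nodup_consecPairs hLG.1).filter _).filter _
  have hlen : F.length = S.card := by
    rw [← List.toFinset_card_of_nodup hnodup, hF,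
      Finset.card_image_of_injective _ (gadgetCycle_injective i)]
  have hcard := Finset.two_mul_card_le_of_add_one_notMem hindep
  refine ⟨by omega, fun h4 => ?_⟩
  rcases Fin.eq_evens_or_odds_of_add_one_mem_iff
      (Finset.add_one_mem_iff_notMem_of_two_mul_card_eq hindep (by omega)) with hS | hS
  · left; intro ab; rw [← List.mem_toFinset, hF, hS]; simp [gadgetCycle]
  · right; intro ab; rw [← List.mem_toFinset, hF, hS]; simp [gadgetCycle]

/-- For any linear extensions `LG` of `Γ` and `LP` of `Π` in the (3,2)-SAT reduction and any
variable index `i`, there are at most four adjacencies from `⟨ab⟩_i ∪ ⟨pqrstuv⟩_i`; moreover,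
if there are exactly four, then they are either
`{(a_i^+, b_i^+), (q_i, r_i), (s_i, t_i), (u_i, v_i)}` or
`{(p_i, q_i), (r_i, s_i), (t_i, u_i), (a_i^-, b_i^-)}`. -/
theorem at_most_four_adjacencies_per_variable
    (n m : ℕ)
    (occ : Fin n → Fin 3 → Fin m × Fin 2)
    (var : Fin m → Fin 2 → Fin n) (slot : Fin m → Fin 2 → Fin 3)
    (pol : Fin n → Fin 3 → Bool)
    (hvar : ∀ i g, var (occ i g).1 (occ i g).2 = i)
    (hslot : ∀ i g, slot (occ i g).1 (occ i g).2 = g)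
    (hocc : ∀ j h, occ (var j h) (slot j h) = (j, h))
    (hpol0 : ∀ i, pol i 0 = true)
    (hpol2 : ∀ i, pol i 2 = false)
    (hdiffvar : ∀ j, var j 0 ≠ var j 1)
    (hdiffcl : ∀ i, Function.Injective fun g => (occ i g).1)
    (LG LP : List (WMarker n m))
    (hLG : IsLinearization (fun a b => rankGamma n m a < rankGamma n m b) LG)
    (hLP : IsLinearization
      (fun a b => rankPi n m var slot pol a < rankPi n m var slot pol b) LP)
    (i : Fin n) :
    ((adjPairs LG LP).filter (fun ab =>
        ab ∈ abPairs n m i ∨ ab ∈ consecPairs (chain n m i))).length ≤ 4 ∧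
    (((adjPairs LG LP).filter (fun ab =>
        ab ∈ abPairs n m i ∨ ab ∈ consecPairs (chain n m i))).length = 4 →
      (∀ ab : WMarker n m × WMarker n m,
        (ab ∈ (adjPairs LG LP).filter (fun ab =>
            ab ∈ abPairs n m i ∨ ab ∈ consecPairs (chain n m i)) ↔
          ab ∈ [((.ap i : WMarker n m), (.bp i : WMarker n m)),
            (.q i, .r i), (.s i, .t i), (.u i, .v i)])) ∨
      (∀ ab : WMarker n m × WMarker n m,
        (ab ∈ (adjPairs LG LP).filter (fun ab =>
            ab ∈ abPairs n m i ∨ ab ∈ consecPairs (chain n m i)) ↔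
          ab ∈ [((.p i : WMarker n m), (.q i : WMarker n m)),
            (.r i, .s i), (.t i, .u i), (.am i, .bm i)]))) :=
  at_most_four_adjacencies_per_variable_general n m occ var slot pol hvar hslot LG LP hLG hLP i
end
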